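/- Let f be a saturated n-ary polymorphism of (LO₂, LO₃) with no small 2-set, let x ∈ [n] be such that {x} is a 1-set of f, and let S be a 4-element 2-set of f with x ∈ S. Then for every z ∈ [n] with z ∉ S, the set {z, x} is a 1-set of f. -/

import Mathlib

open Finset

/-- A triple of naturals has a unique maximum entry. -/
def HasUniqueMax (a b c : ℕ) : Prop :=
  (b < a ∧ c < a) ∨ (a < b ∧ c < b) ∨ (a < c ∧ b < c)

/-- `f` is an `n`-ary polymorphism of (LO₂, LO₃): it maps subsets of `[n]` to `{0,1,2}`
and sends every partition of `[n]` into three (possibly empty) parts to a triple with a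
unique maximum. -/
def IsLOPoly (n : ℕ) (f : Finset (Fin n) → ℕ) : Prop :=
  (∀ X, f X ≤ 2) ∧
  ∀ X Y Z : Finset (Fin n), Disjoint X Y → Disjoint X Z → Disjoint Y Z →
    X ∪ Y ∪ Z = Finset.univ → HasUniqueMax (f X) (f Y) (f Z)

/-- The function obtained from `f` by changing the value of `X` to `i`. -/
def LORecolour {n : ℕ} (f : Finset (Fin n) → ℕ) (X : Finset (Fin n)) (i : ℕ) :
    Finset (Fin n) → ℕ :=
  fun Y => if Y = X then i else f Y

/-- `X` is recolourable to `i` for `f`. -/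
def LORecolourableTo {n : ℕ} (f : Finset (Fin n) → ℕ) (X : Finset (Fin n)) (i : ℕ) : Prop :=
  i ≠ f X ∧ IsLOPoly n (LORecolour f X i)

/-- A boolean set is static if it is not recolourable to the opposite boolean value. -/
def LOStatic {n : ℕ} (f : Finset (Fin n) → ℕ) (X : Finset (Fin n)) : Prop :=
  (f X = 0 ∧ ¬ LORecolourableTo f X 1) ∨ (f X = 1 ∧ ¬ LORecolourableTo f X 0)

/-- `(X, Y, Z)` is a boolean partition of `[n]` for `f`. -/
def LOBoolPartition {n : ℕ} (f : Finset (Fin n) → ℕ) (X Y Z : Finset (Fin n)) : Prop :=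
  Disjoint X Y ∧ Disjoint X Z ∧ Disjoint Y Z ∧ X ∪ Y ∪ Z = Finset.univ ∧
    ({f X, f Y, f Z} : Set ℕ) = {0, 1}

/-- Every superset of a 2-set is a 2-set. -/
def LOUpwardsClosed {n : ℕ} (f : Finset (Fin n) → ℕ) : Prop :=
  ∀ X Y : Finset (Fin n), f X = 2 → X ⊆ Y → f Y = 2

/-- `f` is saturated: upwards closed and the complement of every boolean set is a 2-set. -/
def LOSaturated {n : ℕ} (f : Finset (Fin n) → ℕ) : Prop :=
  LOUpwardsClosed f ∧ ∀ X : Finset (Fin n), f X ≤ 1 → f Xᶜ = 2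

/-- One step of saturation: `g` is a polymorphism obtained from `f` by recolouring a
single boolean set of `f` to 2. -/
def LORecolourStep {n : ℕ} (f g : Finset (Fin n) → ℕ) : Prop :=
  IsLOPoly n g ∧ ∃ X, f X ≤ 1 ∧ g = LORecolour f X 2

/-- `g` is a saturation of `f`. -/
def IsLOSaturation {n : ℕ} (f g : Finset (Fin n) → ℕ) : Prop :=
  IsLOPoly n g ∧ LOSaturated g ∧ Relation.ReflTransGen LORecolourStep f g

/-- `f` has no small 2-set (a 2-set with at most 3 elements). -/
def LONoSmallTwoSet {n : ℕ} (f : Finset (Fin n) → ℕ) : Prop :=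
  ∀ X, f X = 2 → 4 ≤ X.card

/-- `g` is a pure saturation of `f`: a saturation with no small 2-set. -/
def IsLOPureSaturation {n : ℕ} (f g : Finset (Fin n) → ℕ) : Prop :=
  IsLOSaturation f g ∧ LONoSmallTwoSet g

/-- `M` is a minimal (under inclusion) 2-set of `f`. -/
def LOMinTwoSet {n : ℕ} (f : Finset (Fin n) → ℕ) (M : Finset (Fin n)) : Prop :=
  f M = 2 ∧ ∀ Y, Y ⊂ M → f Y ≠ 2

/-- `T_f`: the union of the minimal 2-sets of `f`. -/
def LOTSet {n : ℕ} (f : Finset (Fin n) → ℕ) : Set (Fin n) :=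
  {a | ∃ M, LOMinTwoSet f M ∧ a ∈ M}

/-- `f` is a recoloured projection with dictating variable `t`: every static boolean set
`S` satisfies `f S = 1` iff `t ∈ S` (and `f S = 0` otherwise). -/
def LORecolProj {n : ℕ} (f : Finset (Fin n) → ℕ) (t : Fin n) : Prop :=
  ∀ S, f S ≤ 1 → LOStatic f S → f S = if t ∈ S then 1 else 0

/-- The `π`-minor of `f`: `f^π (X) = f(π⁻¹(X))`. -/
def LOMinor {n m : ℕ} (f : Finset (Fin n) → ℕ) (π : Fin n → Fin m) :
    Finset (Fin m) → ℕ :=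
  fun X => f (Finset.univ.filter (fun a => π a ∈ X))

/-
Write `S = {x, a, b, c}`. Since `S` is a 2-set, `Sᶜ` is not (look at the partition `(S, Sᶜ, ∅)`),
so the partition `({x}, {a, b, c}, Sᶜ)` forces `f {a, b, c} = f Sᶜ = 0`.
If `f {z, x} = 0`, then `W = (S ∪ {z})ᶜ` is boolean (it lies in `Sᶜ`, which is not a 2-set)
and the partition `({z, x}, {a, b, c}, W)` makes it a 1-set. The partitions
`({x, b}, {z, a, c}, W)` and `({z, x, b}, {a, c}, W)` then give `f {x, b} = f {a, c} = 0`,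
so the partition `({x, b}, {a, c}, Sᶜ)` is constantly 0 and has no unique maximum.
-/

namespace IsLOPoly

variable {n : ℕ} {f : Finset (Fin n) → ℕ}

theorem hasUniqueMax_of_compl (hf : IsLOPoly n f) {X Y Z : Finset (Fin n)}
    (hXY : Disjoint X Y) (hZ : (X ∪ Y)ᶜ = Z) : HasUniqueMax (f X) (f Y) (f Z) := by
  subst hZ
  exact hf.2 X Y _ hXY (disjoint_compl_right_iff.2 subset_union_left)
    (disjoint_compl_right_iff.2 subset_union_right) (union_compl _)

theorem compl_ne_two (hf : IsLOPoly n f) {X : Finset (Fin n)} (hX : f X = 2) : f Xᶜ ≠ 2 := by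
  have h := hf.hasUniqueMax_of_compl (disjoint_empty_right X) (by rw [union_empty])
  have := hf.1 ∅
  unfold HasUniqueMax at h
  omega

theorem add_add_eq_one (hf : IsLOPoly n f) {X Y Z : Finset (Fin n)}
    (hXY : Disjoint X Y) (hZ : (X ∪ Y)ᶜ = Z) (hX : f X ≤ 1) (hY : f Y ≤ 1) (hZ' : f Z ≤ 1) :
    f X + f Y + f Z = 1 := by
  have h := hf.hasUniqueMax_of_compl hXY hZ
  unfold HasUniqueMax at h
  omega

end IsLOPoly

theorem LONoSmallTwoSet.le_one {n : ℕ} {f : Finset (Fin n) → ℕ} (hf : IsLOPoly n f)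
    (hns : LONoSmallTwoSet f) {X : Finset (Fin n)} (hX : X.card ≤ 3) : f X ≤ 1 := by
  have := hf.1 X
  have := mt (hns X)
  omega

theorem stmt17_general (n : ℕ) (f : Finset (Fin n) → ℕ) (hf : IsLOPoly n f)
    (hsat : LOSaturated f) (hns : LONoSmallTwoSet f)
    (x : Fin n) (hx : f {x} = 1)
    (S : Finset (Fin n)) (hS : f S = 2) (hScard : S.card = 4) (hxS : x ∈ S) :
    ∀ z : Fin n, z ∉ S → f ({z, x} : Finset (Fin n)) = 1 := by
  intro z hzS
  obtain ⟨a, b, c, hab, hac, hbc, habc⟩ :=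
    card_eq_three.1 (show (S.erase x).card = 3 by rw [card_erase_of_mem hxS, hScard])
  have hx_abc : x ∉ ({a, b, c} : Finset (Fin n)) := habc ▸ notMem_erase x S
  obtain rfl : S = {x} ∪ {a, b, c} := by rw [← habc, ← insert_eq, insert_erase hxS]
  simp only [mem_insert, mem_singleton, mem_union, not_or] at hx_abc hzS
  have hpair (u v : Fin n) : f {u, v} ≤ 1 := hns.le_one hf (card_le_two.trans (by norm_num))
  have htriple (u v w : Fin n) : f {u, v, w} ≤ 1 := hns.le_one hf card_le_three
  have hSc : f ({x} ∪ {a, b, c})ᶜ ≤ 1 := by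
    have := hf.compl_ne_two hS
    have := hf.1 ({x} ∪ {a, b, c})ᶜ
    omega
  have h_x_abc := hf.add_add_eq_one (by simp; grind) rfl hx.le (htriple ..) hSc
  by_contra hzx
  have hW : f ({z, x} ∪ {a, b, c})ᶜ = 1 := by
    have hW_sub : ({z, x} ∪ {a, b, c} : Finset (Fin n))ᶜ ⊆ ({x} ∪ {a, b, c})ᶜ :=
      compl_subset_compl.2 (union_subset_union_left (subset_insert z {x}))
    have hW_ne_two := mt (hsat.1 _ _ · hW_sub) (hf.compl_ne_two hS)
    have h_zx_abc := hf.add_add_eq_one (by simp; grind) rfl (hpair z x) (htriple a b c)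
      (by have := hf.1 ({z, x} ∪ {a, b, c})ᶜ; omega)
    have := hpair z x
    omega
  have h_xb_zac := hf.add_add_eq_one (X := {x, b}) (Y := {z, a, c}) (by simp; grind) (by grind)
    (hpair ..) (htriple ..) hW.le
  have h_zxb_ac := hf.add_add_eq_one (X := {z, x, b}) (Y := {a, c}) (by simp; grind) (by grind)
    (htriple ..) (hpair ..) hW.le
  have h_xb_ac := hf.add_add_eq_one (X := {x, b}) (Y := {a, c}) (by simp; grind) (by grind)
    (hpair ..) (hpair ..) hSc
  omega

/-- For a saturated polymorphism with no small 2-set, if `{x}` is a 1-set and `S` is a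
4-element 2-set containing `x`, then `{z, x}` is a 1-set for every `z ∉ S`. -/
theorem stmt17 (n : ℕ) (hn : 1 ≤ n) (f : Finset (Fin n) → ℕ) (hf : IsLOPoly n f)
    (hsat : LOSaturated f) (hns : LONoSmallTwoSet f)
    (x : Fin n) (hx : f {x} = 1)
    (S : Finset (Fin n)) (hS : f S = 2) (hScard : S.card = 4) (hxS : x ∈ S) :
    ∀ z : Fin n, z ∉ S → f ({z, x} : Finset (Fin n)) = 1 :=
  stmt17_general n f hf hsat hns x hx S hS hScard hxS
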